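/- There exists a universal constant C > 0 such that the following holds. Let N ≥ 1, d > 0, and let X_1, …, X_N ∈ ℝ³ satisfy |X_i − X_j| ≥ d for all i ≠ j. Let x ∈ ℝ³ and let i ∈ {1, …, N} be such that |x − X_i| ≤ |x − X_j| for all j ∈ {1, …, N}. Then ∑_{j ≠ i} 1/|x − X_j|⁴ ≤ C / d⁴. -/

import Mathlib

/-!
Separation and minimality put every `X j` with `j ≠ i` at distance at least `d / 2` from `x`.
Sort these points into shells `k * d / 2 ≤ |x - X j| < (k + 1) * d / 2` with `k ≥ 1`. The
disjoint balls of radius `d / 2` around the points of shell `k` lie in an annulus of volume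
proportional to `(k + 2)³ - (k - 1)³ ≤ 27 k²`, so shell `k` holds at most `27 k²` points, each
contributing at most `16 / (k⁴ d⁴)`. Summing over `k` gives `432 ζ(2) / d⁴ = 72 π² / d⁴`.
-/

open Finset

open MeasureTheory Metric Module Real

theorem ball_subset_closedBall_diff_ball {X : Type*} [PseudoMetricSpace X] {x y : X}
    {a b : ℝ} (ha : a ≤ dist x y) (hb : dist x y ≤ b) (r : ℝ) :
    ball y r ⊆ closedBall x (b + r) \ ball x (a - r) := by
  intro z hz
  rw [mem_ball] at hz
  refine ⟨?_, ?_⟩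
  · rw [mem_closedBall]
    linarith [dist_triangle z y x, dist_comm x y]
  · rw [mem_ball, not_lt]
    linarith [dist_triangle x z y, dist_comm y z, dist_comm z x]

theorem half_le_dist_of_dist_le {X : Type*} [PseudoMetricSpace X] {x a b : X} {d : ℝ}
    (hsep : d ≤ dist a b) (hclose : dist x a ≤ dist x b) : d / 2 ≤ dist x b := by
  linarith [dist_triangle_left a b x]

section FiniteDimensional

variable {E : Type*} [NormedAddCommGroup E] [NormedSpace ℝ E] [FiniteDimensional ℝ E]
  [Nontrivial E]

namespace MeasureTheory.Measure

variable [MeasurableSpace E] [BorelSpace E] (μ : Measure E) [μ.IsAddHaarMeasure]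

theorem addHaar_real_ball (x : E) {r : ℝ} (hr : 0 ≤ r) :
    μ.real (ball x r) = r ^ finrank ℝ E * μ.real (ball 0 1) := by
  rw [← addHaar_real_closedBall_eq_addHaar_real_ball, addHaar_real_closedBall μ x hr]

theorem addHaar_real_closedBall_diff_ball (x : E) {R₁ R₂ : ℝ} (h₁ : 0 ≤ R₁) (h₁₂ : R₁ ≤ R₂) :
    μ.real (closedBall x R₂ \ ball x R₁) =
      (R₂ ^ finrank ℝ E - R₁ ^ finrank ℝ E) * μ.real (ball 0 1) := by
  rw [measureReal_sdiff (ball_subset_closedBall.trans (closedBall_subset_closedBall h₁₂))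
      measurableSet_ball measure_closedBall_lt_top.ne, addHaar_real_closedBall μ x (h₁.trans h₁₂),
    addHaar_real_ball μ x h₁, sub_mul]

end MeasureTheory.Measure

theorem card_mul_pow_le_of_ball_subset_closedBall_diff_ball {ι : Type*} {s : Finset ι}
    {y : ι → E} {r : ℝ} (hr : 0 < r) (hdisj : (s : Set ι).PairwiseDisjoint fun j ↦ ball (y j) r)
    (x : E) {R₁ R₂ : ℝ} (h₁ : 0 ≤ R₁) (h₁₂ : R₁ ≤ R₂)
    (hsub : ∀ j ∈ s, ball (y j) r ⊆ closedBall x R₂ \ ball x R₁) :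
    #s * r ^ finrank ℝ E ≤ R₂ ^ finrank ℝ E - R₁ ^ finrank ℝ E := by
  borelize E
  let μ : Measure E := Measure.addHaar
  have hunit : 0 < μ.real (ball 0 1) :=
    ENNReal.toReal_pos (measure_ball_pos μ 0 one_pos).ne' measure_ball_lt_top.ne
  refine le_of_mul_le_mul_right ?_ hunit
  calc #s * r ^ finrank ℝ E * μ.real (ball 0 1)
      = ∑ j ∈ s, μ.real (ball (y j) r) := by
        simp [Measure.addHaar_real_ball μ _ hr.le, mul_assoc]
    _ = μ.real (⋃ j ∈ s, ball (y j) r) :=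
        (measureReal_biUnion_finset hdisj fun _ _ ↦ measurableSet_ball).symm
    _ ≤ μ.real (closedBall x R₂ \ ball x R₁) :=
        measureReal_mono (Set.iUnion₂_subset hsub)
          (measure_ne_top_of_subset Set.sdiff_subset measure_closedBall_lt_top.ne)
    _ = _ := Measure.addHaar_real_closedBall_diff_ball μ x h₁ h₁₂

theorem card_floor_dist_div_eq_le {ι : Type*} (s : Finset ι) (y : ι → E) {ρ : ℝ} (hρ : 0 < ρ)
    (hsep : ∀ i ∈ s, ∀ j ∈ s, i ≠ j → 2 * ρ ≤ dist (y i) (y j)) (x : E) {k : ℕ} (hk : 1 ≤ k) :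
    (#{j ∈ s | ⌊dist x (y j) / ρ⌋₊ = k} : ℝ) ≤
      ((k : ℝ) + 2) ^ finrank ℝ E - ((k : ℝ) - 1) ^ finrank ℝ E := by
  have hk' : (1 : ℝ) ≤ k := by exact_mod_cast hk
  have hdisj : ((s.filter fun j ↦ ⌊dist x (y j) / ρ⌋₊ = k) : Set ι).PairwiseDisjoint
      fun j ↦ ball (y j) ρ := fun i hi j hj hij ↦
    ball_disjoint_ball (by linarith [hsep i (mem_filter.1 hi).1 j (mem_filter.1 hj).1 hij])
  have hsub : ∀ j ∈ s.filter fun j ↦ ⌊dist x (y j) / ρ⌋₊ = k,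
      ball (y j) ρ ⊆ closedBall x (((k : ℝ) + 2) * ρ) \ ball x (((k : ℝ) - 1) * ρ) := by
    intro j hj
    have hfloor := (mem_filter.1 hj).2
    have hlow : k * ρ ≤ dist x (y j) := by
      rw [← le_div_iff₀ hρ, ← hfloor]
      exact Nat.floor_le (by positivity)
    have hhigh : dist x (y j) ≤ (k + 1) * ρ := by
      rw [← div_le_iff₀ hρ, ← hfloor]
      exact (Nat.lt_floor_add_one _).le
    convert ball_subset_closedBall_diff_ball hlow hhigh ρ using 3 <;> ring
  have hpack := card_mul_pow_le_of_ball_subset_closedBall_diff_ball hρ hdisj x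
    (by nlinarith) (by nlinarith) hsub
  rw [mul_pow, mul_pow, ← sub_mul] at hpack
  exact le_of_mul_le_mul_right hpack (by positivity)

theorem card_floor_dist_div_eq_le_of_finrank_eq_three (hE : finrank ℝ E = 3) {ι : Type*}
    (s : Finset ι) (y : ι → E) {ρ : ℝ} (hρ : 0 < ρ)
    (hsep : ∀ i ∈ s, ∀ j ∈ s, i ≠ j → 2 * ρ ≤ dist (y i) (y j)) (x : E) {k : ℕ} (hk : 1 ≤ k) :
    #{j ∈ s | ⌊dist x (y j) / ρ⌋₊ = k} ≤ 27 * k ^ 2 := by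
  have hk' : (1 : ℝ) ≤ k := by exact_mod_cast hk
  have h := card_floor_dist_div_eq_le s y hρ hsep x hk
  rw [hE] at h
  have h27 : (#{j ∈ s | ⌊dist x (y j) / ρ⌋₊ = k} : ℝ) ≤ 27 * k ^ 2 := h.trans (by nlinarith)
  exact_mod_cast h27

end FiniteDimensional

theorem one_div_pow_le_mul_one_div_floor_pow {ρ r : ℝ} (hρ : 0 < ρ) (hr : ρ ≤ r) (n : ℕ) :
    1 / r ^ n ≤ 1 / ρ ^ n * (1 / (⌊r / ρ⌋₊ : ℝ) ^ n) := by
  have hk : (1 : ℝ) ≤ ⌊r / ρ⌋₊ := by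
    exact_mod_cast (Nat.one_le_floor_iff _).2 ((one_le_div hρ).2 hr)
  have hle : ⌊r / ρ⌋₊ * ρ ≤ r :=
    (le_div_iff₀ hρ).1 (Nat.floor_le (div_nonneg (hρ.le.trans hr) hρ.le))
  calc 1 / r ^ n ≤ 1 / (⌊r / ρ⌋₊ * ρ) ^ n :=
        one_div_le_one_div_of_le (pow_pos (by nlinarith) n)
          (pow_le_pow_left₀ (by positivity) hle n)
    _ = 1 / ρ ^ n * (1 / (⌊r / ρ⌋₊ : ℝ) ^ n) := by rw [mul_pow, one_div_mul_one_div, mul_comm]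

theorem sum_one_div_pow_le_of_card_fiber_le {ι : Type*} (s : Finset ι) (f : ι → ℕ) (c p : ℕ)
    (hf : ∀ j ∈ s, 1 ≤ f j) (hfib : ∀ k, 1 ≤ k → #{j ∈ s | f j = k} ≤ c * k ^ p) :
    ∑ j ∈ s, 1 / (f j : ℝ) ^ (p + 2) ≤ c * (π ^ 2 / 6) := by
  calc ∑ j ∈ s, 1 / (f j : ℝ) ^ (p + 2)
      = ∑ k ∈ s.image f, #{j ∈ s | f j = k} • (1 / (k : ℝ) ^ (p + 2)) :=
        sum_comp (fun k : ℕ ↦ 1 / (k : ℝ) ^ (p + 2)) f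
    _ ≤ ∑ k ∈ s.image f, c * (1 / (k : ℝ) ^ 2) := by
        refine sum_le_sum fun k hk ↦ ?_
        obtain ⟨j, hj, rfl⟩ := mem_image.1 hk
        have hpos : (0 : ℝ) < f j := by exact_mod_cast hf j hj
        rw [nsmul_eq_mul]
        calc (#{i ∈ s | f i = f j} : ℝ) * (1 / (f j : ℝ) ^ (p + 2))
            ≤ (c * (f j : ℝ) ^ p) * (1 / (f j : ℝ) ^ (p + 2)) := by
              gcongr; exact_mod_cast hfib _ (hf j hj)
          _ = c * (1 / (f j : ℝ) ^ 2) := by field_simp; ring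
    _ = c * ∑ k ∈ s.image f, 1 / (k : ℝ) ^ 2 := (mul_sum _ _ _).symm
    _ ≤ c * (π ^ 2 / 6) := by
        gcongr
        exact sum_le_hasSum _ (fun _ _ ↦ by positivity) hasSum_zeta_two

theorem sum_inv_dist_fourth_le :
    ∃ C : ℝ, 0 < C ∧
      ∀ (N : ℕ), 1 ≤ N → ∀ (d : ℝ), 0 < d →
        ∀ X : Fin N → EuclideanSpace ℝ (Fin 3),
          (∀ i j : Fin N, i ≠ j → d ≤ ‖X i - X j‖) →
          ∀ (x : EuclideanSpace ℝ (Fin 3)) (i : Fin N),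
            (∀ j : Fin N, ‖x - X i‖ ≤ ‖x - X j‖) →
            ∑ j ∈ Finset.univ.erase i, 1 / ‖x - X j‖ ^ 4 ≤ C / d ^ 4 := by
  refine ⟨72 * π ^ 2, by positivity, fun N _ d hd X hX x i hi ↦ ?_⟩
  have hρ : 0 < d / 2 := by positivity
  have hfar : ∀ j ∈ univ.erase i, d / 2 ≤ dist x (X j) := fun j hj ↦
    half_le_dist_of_dist_le (by simpa [dist_eq_norm] using hX i j (ne_of_mem_erase hj).symm)
      (by simpa [dist_eq_norm] using hi j)
  have hsep : ∀ a ∈ univ.erase i, ∀ b ∈ univ.erase i, a ≠ b → 2 * (d / 2) ≤ dist (X a) (X b) :=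
    fun a _ b _ hab ↦ by rw [mul_div_cancel₀ d two_ne_zero, dist_eq_norm]; exact hX a b hab
  calc ∑ j ∈ univ.erase i, 1 / ‖x - X j‖ ^ 4
      = ∑ j ∈ univ.erase i, 1 / dist x (X j) ^ 4 := by simp only [dist_eq_norm]
    _ ≤ ∑ j ∈ univ.erase i, 1 / (d / 2) ^ 4 * (1 / (⌊dist x (X j) / (d / 2)⌋₊ : ℝ) ^ 4) :=
        sum_le_sum fun j hj ↦ one_div_pow_le_mul_one_div_floor_pow hρ (hfar j hj) 4
    _ = 1 / (d / 2) ^ 4 * ∑ j ∈ univ.erase i, 1 / (⌊dist x (X j) / (d / 2)⌋₊ : ℝ) ^ (2 + 2) :=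
        (mul_sum _ _ _).symm
    _ ≤ 1 / (d / 2) ^ 4 * ((27 : ℕ) * (π ^ 2 / 6)) := by
        gcongr
        exact sum_one_div_pow_le_of_card_fiber_le _ _ 27 2
          (fun j hj ↦ (Nat.one_le_floor_iff _).2 ((one_le_div hρ).2 (hfar j hj)))
          fun k hk ↦ card_floor_dist_div_eq_le_of_finrank_eq_three finrank_euclideanSpace_fin
            _ X hρ hsep x hk
    _ = 72 * π ^ 2 / d ^ 4 := by push_cast; ring
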